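/- For 0 < s < 1, the Walsh–Fourier coefficients of the s-kernel satisfy \hatφ_s(k) = O(k^{s-1}) as k → ∞. -/

import Mathlib

open MeasureTheory Filter Topology
open scoped ENNReal Classical

/-- The Cantor dyadic group: sequences of 0s and 1s with coordinatewise addition mod 2. -/
abbrev G : Type := ℕ → ZMod 2

/-- The metric ρ(x,y) = ∑_{i=1}^∞ 2^{-i} |x_i - y_i| (coordinates indexed from 0 here). -/
noncomputable def rho (x y : G) : ℝ :=
  ∑' i : ℕ, (2:ℝ) ^ (-(i:ℝ) - 1) * (if x i = y i then 0 else 1)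

/-- The subgroup G_n of sequences vanishing in the first n coordinates. -/
def Gset (n : ℕ) : Set G := {x | ∀ i < n, x i = 0}

/-- The coset K_n(x) = x + G_n of G_n containing x. -/
def Kset (n : ℕ) (x : G) : Set G := {y | x - y ∈ Gset n}

/-- The k-th Walsh function. -/
def walsh (k : ℕ) (x : G) : ℝ :=
  ∏ i ∈ Finset.range k, if k.testBit i ∧ x i = 1 then (-1 : ℝ) else 1

/-- The s-kernel: φ_s(0) = 0 and φ_s(x) = 2^{s(n-1)} for x ∈ G_{n-1} \ G_n,
i.e. 2^{s j} where j is the first nonzero coordinate of x. -/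
noncomputable def kernel (s : ℝ) (x : G) : ℝ :=
  if h : ∃ i, x i ≠ 0 then (2:ℝ) ^ (s * (Nat.find h : ℝ)) else 0

/-- The truncated s-kernel φ_s^n. -/
noncomputable def kernelTrunc (s : ℝ) (n : ℕ) (x : G) : ℝ :=
  if x = 0 then 0 else if x ∈ Gset n then (2:ℝ) ^ (s * (n:ℝ)) else kernel s x

/-- Walsh–Fourier coefficient of the s-kernel w.r.t. a (Haar) measure lam. -/
noncomputable def phiHat (s : ℝ) (lam : Measure G) (k : ℕ) : ℝ :=
  ∫ x, kernel s x * walsh k x ∂lam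

/-- Walsh–Fourier coefficient of the truncated s-kernel. -/
noncomputable def phiHatTrunc (s : ℝ) (n : ℕ) (lam : Measure G) (k : ℕ) : ℝ :=
  ∫ x, kernelTrunc s n x * walsh k x ∂lam

/-- Walsh–Fourier coefficient of a measure μ. -/
noncomputable def muHat (μ : Measure G) (k : ℕ) : ℝ :=
  ∫ x, walsh k x ∂μ

/-- s-potential of μ at x. -/
noncomputable def potential (s : ℝ) (μ : Measure G) (x : G) : ℝ≥0∞ :=
  ∫⁻ y, ENNReal.ofReal (kernel s (x - y)) ∂μ

/-- s-energy of μ. -/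
noncomputable def energy (s : ℝ) (μ : Measure G) : ℝ≥0∞ :=
  ∫⁻ x, ∫⁻ y, ENNReal.ofReal (kernel s (x - y)) ∂μ ∂μ

/-- truncated s-energy of μ. -/
noncomputable def energyTrunc (s : ℝ) (n : ℕ) (μ : Measure G) : ℝ≥0∞ :=
  ∫⁻ x, ∫⁻ y, ENNReal.ofReal (kernelTrunc s n (x - y)) ∂μ ∂μ

/-- Diameter of a set in the metric ρ, valued in ℝ≥0∞. -/
noncomputable def diamRho (I : Set G) : ℝ≥0∞ :=
  ⨆ x ∈ I, ⨆ y ∈ I, ENNReal.ofReal (rho x y)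

/-- Pre-Hausdorff measure H^s_δ via countable covers of ρ-diameter < δ. -/
noncomputable def Hdelta (s : ℝ) (δ : ℝ≥0∞) (A : Set G) : ℝ≥0∞ :=
  ⨅ (I : ℕ → Set G) (_ : A ⊆ ⋃ i, I i) (_ : ∀ i, diamRho (I i) < δ),
    ∑' i, diamRho (I i) ^ s

/-- s-dimensional Hausdorff measure w.r.t. the metric ρ. -/
noncomputable def Hmeas (s : ℝ) (A : Set G) : ℝ≥0∞ :=
  ⨆ (δ : ℝ≥0∞) (_ : 0 < δ), Hdelta s δ A

/-- Hausdorff dimension w.r.t. the metric ρ. -/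
noncomputable def hdimRho (A : Set G) : ℝ≥0∞ :=
  ⨆ (t : ℝ) (_ : Hmeas t A = ⊤), ENNReal.ofReal t

/-!
The kernel is the constant `2 ^ (s * j)` on the shell `G_j \ G_{j+1}`, and `∫_{G_j} w_k` equals
`2⁻¹ ^ j` if `k < 2 ^ j` (then `w_k = 1` on `G_j`) and `0` otherwise (then `k` has a set bit
`i ≥ j`, and translating by the `i`-th unit vector preserves `G_j` and flips the sign of `w_k`).
Hence `φ̂_s(k) = ∑ⱼ 2 ^ (s * j) * (∫_{G_j} w_k - ∫_{G_{j+1}} w_k)`, where the `j`-th term is at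
most `(2 ^ (s - 1)) ^ j` and vanishes unless `k < 2 ^ (j + 1)`. The geometric tail starting at
`j = log₂ k` is `O(k ^ (s - 1))`.
-/

lemma measurableSet_Gset (n : ℕ) : MeasurableSet (Gset n) := by
  simp only [Gset, Set.ofPred_forall]
  exact MeasurableSet.iInter fun i => MeasurableSet.iInter fun _ =>
    measurable_pi_apply i (measurableSet_singleton 0)

lemma mem_Gset_succ_iff {n : ℕ} {x : G} : x ∈ Gset (n + 1) ↔ x ∈ Gset n ∧ x n = 0 :=
  Nat.forall_lt_succ_right

lemma Gset_succ_subset (n : ℕ) : Gset (n + 1) ⊆ Gset n :=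
  fun _ hx => (mem_Gset_succ_iff.1 hx).1

lemma mem_Gset_sdiff_succ_iff {n : ℕ} {x : G} :
    x ∈ Gset n \ Gset (n + 1) ↔ x ∈ Gset n ∧ x n ≠ 0 := by
  rw [Set.mem_sdiff, mem_Gset_succ_iff]
  tauto

lemma eq_of_mem_Gset_sdiff_succ {i j : ℕ} {x : G} (hi : x ∈ Gset i \ Gset (i + 1))
    (hj : x ∈ Gset j \ Gset (j + 1)) : i = j := by
  rw [mem_Gset_sdiff_succ_iff] at hi hj
  by_contra hne
  rcases Nat.lt_or_gt_of_ne hne with h | h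
  exacts [hi.2 (hj.1 i h), hj.2 (hi.1 j h)]

lemma exists_mem_Gset_sdiff_succ {x : G} (hx : x ≠ 0) : ∃ j, x ∈ Gset j \ Gset (j + 1) := by
  have h : ∃ i, x i ≠ 0 := by simpa [funext_iff] using hx
  exact ⟨Nat.find h, mem_Gset_sdiff_succ_iff.2
    ⟨fun i hi => not_not.1 (Nat.find_min h hi), Nat.find_spec h⟩⟩

lemma single_add_mem_Gset_iff {i n : ℕ} (hn : n ≤ i) {x : G} :
    Pi.single i 1 + x ∈ Gset n ↔ x ∈ Gset n :=
  forall₂_congr fun m hm => by rw [Pi.add_apply, Pi.single_eq_of_ne (by omega), zero_add]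

lemma single_add_mem_Gset_succ_iff {n : ℕ} {x : G} :
    Pi.single n 1 + x ∈ Gset (n + 1) ↔ x ∈ Gset n ∧ x n = 1 := by
  have : ∀ a : ZMod 2, 1 + a = 0 ↔ a = 1 := by decide
  simp [mem_Gset_succ_iff, single_add_mem_Gset_iff le_rfl, this]

lemma measurable_walsh (k : ℕ) : Measurable (walsh k) :=
  Finset.measurable_prod _ fun i _ => by
    by_cases hk : k.testBit i
    · simp only [hk, true_and]
      exact Measurable.ite (measurableSet_eq_fun (measurable_pi_apply i) measurable_const)
        measurable_const measurable_const
    · simp [hk]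

lemma abs_walsh (k : ℕ) (x : G) : |walsh k x| = 1 := by
  rw [walsh, Finset.abs_prod]
  exact Finset.prod_eq_one fun i _ => by split <;> simp

lemma integrable_walsh (lam : Measure G) [IsFiniteMeasure lam] (k : ℕ) :
    Integrable (walsh k) lam :=
  Integrable.of_bound (measurable_walsh k).aestronglyMeasurable 1
    (Eventually.of_forall fun x => by rw [Real.norm_eq_abs, abs_walsh])

lemma walsh_single_add {k i : ℕ} (hk : k.testBit i) (x : G) :
    walsh k (Pi.single i 1 + x) = -walsh k x := by
  have hi : i ∈ Finset.range k :=
    Finset.mem_range.2 (Nat.lt_two_pow_self.trans_le (Nat.ge_two_pow_of_testBit hk))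
  rw [walsh, walsh, ← Finset.mul_prod_erase _ _ hi, ← Finset.mul_prod_erase _ _ hi,
    neg_mul_eq_neg_mul]
  congr 1
  · have : ∀ a : ZMod 2, 1 + a = 1 ↔ a ≠ 1 := by decide
    simp only [Pi.add_apply, Pi.single_eq_same, hk, true_and, this]
    by_cases h : x i = 1 <;> simp [h]
  · refine Finset.prod_congr rfl fun j hj => ?_
    simp [Finset.ne_of_mem_erase hj]

lemma walsh_eq_one_of_mem_Gset {k j : ℕ} (hk : k < 2 ^ j) {x : G} (hx : x ∈ Gset j) :
    walsh k x = 1 :=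
  Finset.prod_eq_one fun i _ => if_neg fun ⟨hbit, hxi⟩ => by
    have hij : i < j := (Nat.pow_lt_pow_iff_right (by norm_num)).1
      ((Nat.ge_two_pow_of_testBit hbit).trans_lt hk)
    simp [hx i hij] at hxi

lemma kernel_zero (s : ℝ) : kernel s 0 = 0 := by
  simp [kernel]

lemma kernel_eq_of_mem_Gset_sdiff_succ (s : ℝ) {j : ℕ} {x : G}
    (hx : x ∈ Gset j \ Gset (j + 1)) : kernel s x = 2 ^ (s * j) := by
  rw [mem_Gset_sdiff_succ_iff] at hx
  have h : ∃ i, x i ≠ 0 := ⟨j, hx.2⟩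
  rw [kernel, dif_pos h, (Nat.find_eq_iff h).2 ⟨hx.2, fun i hi => not_not.2 (hx.1 i hi)⟩]

lemma kernel_mul_walsh_eq_tsum (s : ℝ) (k : ℕ) (x : G) :
    kernel s x * walsh k x =
      ∑' j : ℕ, (Gset j \ Gset (j + 1)).indicator (fun y => 2 ^ (s * j) * walsh k y) x := by
  rcases eq_or_ne x 0 with rfl | hx
  · have : ∀ j, (0 : G) ∉ Gset j \ Gset (j + 1) := fun j h =>
      (mem_Gset_sdiff_succ_iff.1 h).2 rfl
    simp [kernel_zero, this]
  · obtain ⟨j, hj⟩ := exists_mem_Gset_sdiff_succ hx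
    rw [tsum_eq_single j fun i hi => Set.indicator_of_notMem
        (fun h => hi (eq_of_mem_Gset_sdiff_succ h hj)) _,
      Set.indicator_of_mem hj, kernel_eq_of_mem_Gset_sdiff_succ s hj]

lemma two_rpow_lt_one {s : ℝ} (hs : s < 1) : (2 : ℝ) ^ (s - 1) < 1 :=
  Real.rpow_lt_one_of_one_lt_of_neg one_lt_two (by linarith)

lemma two_rpow_mul_inv_two_pow (s : ℝ) (j : ℕ) :
    (2 : ℝ) ^ (s * j) * 2⁻¹ ^ j = ((2 : ℝ) ^ (s - 1)) ^ j := by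
  rw [← Real.rpow_mul_natCast zero_le_two, sub_mul, Real.rpow_sub two_pos, one_mul,
    Real.rpow_natCast, div_eq_mul_inv, inv_pow]

lemma two_rpow_pow_log_le {s : ℝ} (hs : s ≤ 1) {k : ℕ} (hk : k ≠ 0) :
    ((2 : ℝ) ^ (s - 1)) ^ Nat.log 2 k ≤ 2 ^ (1 - s) * (k : ℝ) ^ (s - 1) := by
  have hk2 : (k : ℝ) / 2 < 2 ^ Nat.log 2 k := by
    rw [div_lt_iff₀ two_pos, ← pow_succ]
    exact_mod_cast Nat.lt_pow_succ_log_self one_lt_two k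
  calc ((2 : ℝ) ^ (s - 1)) ^ Nat.log 2 k = ((2 : ℝ) ^ Nat.log 2 k) ^ (s - 1) := by
        rw [← Real.rpow_mul_natCast zero_le_two, mul_comm, Real.rpow_natCast_mul zero_le_two]
    _ ≤ ((k : ℝ) / 2) ^ (s - 1) :=
        Real.rpow_le_rpow_of_nonpos (by positivity) hk2.le (by linarith)
    _ = 2 ^ (1 - s) * (k : ℝ) ^ (s - 1) := by
        rw [Real.div_rpow (by positivity) zero_le_two, div_eq_mul_inv, ← Real.rpow_neg zero_le_two,
          neg_sub, mul_comm]

lemma abs_tsum_le_of_abs_le_geometric {f : ℕ → ℝ} {r : ℝ} (hr0 : 0 ≤ r) (hr1 : r < 1)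
    {a : ℕ} (hf0 : ∀ j < a, f j = 0) (hf : ∀ j, |f j| ≤ r ^ j) :
    |∑' j, f j| ≤ r ^ a / (1 - r) := by
  have hsum : Summable f := .of_norm_bounded (summable_geometric_of_lt_one hr0 hr1) hf
  rw [← hsum.sum_add_tsum_nat_add a, Finset.sum_eq_zero fun j hj => hf0 j (Finset.mem_range.1 hj),
    zero_add, div_eq_mul_inv]
  exact tsum_of_norm_bounded ((hasSum_geometric_of_lt_one hr0 hr1).mul_left (r ^ a))
    fun j => by rw [Real.norm_eq_abs, ← pow_add, add_comm]; exact hf (j + a)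

section HaarMeasure

variable (lam : Measure G) [IsProbabilityMeasure lam] [lam.IsAddLeftInvariant]

lemma measure_Gset (n : ℕ) : lam (Gset n) = 2⁻¹ ^ n := by
  induction n with
  | zero => simp [Gset]
  | succ n ih =>
    have hsplit : Gset n = Gset (n + 1) ∪ (Pi.single n 1 + ·) ⁻¹' Gset (n + 1) := by
      ext x
      rw [Set.mem_union, Set.mem_preimage, single_add_mem_Gset_succ_iff, mem_Gset_succ_iff]
      have hxn : x n = 0 ∨ x n = 1 := (by decide : ∀ a : ZMod 2, a = 0 ∨ a = 1) (x n)
      tauto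
    have hdisj : Disjoint (Gset (n + 1)) ((Pi.single n 1 + ·) ⁻¹' Gset (n + 1)) :=
      Set.disjoint_left.2 fun x hx hx' => by
        rw [mem_Gset_succ_iff] at hx
        rw [Set.mem_preimage, single_add_mem_Gset_succ_iff, hx.2] at hx'
        exact zero_ne_one hx'.2
    have htwo : lam (Gset n) = 2 * lam (Gset (n + 1)) := by
      rw [hsplit, measure_union hdisj ((measurableSet_Gset _).preimage (measurable_const_add _)),
        measure_preimage_add, two_mul]
    rw [pow_succ, ← ih, htwo, mul_comm, ← mul_assoc,
      ENNReal.inv_mul_cancel two_ne_zero ENNReal.ofNat_ne_top, one_mul]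

lemma measureReal_Gset (n : ℕ) : lam.real (Gset n) = 2⁻¹ ^ n := by
  simp [measureReal_def, measure_Gset]

lemma setIntegral_walsh_Gset (k j : ℕ) :
    ∫ x in Gset j, walsh k x ∂lam = if k < 2 ^ j then 2⁻¹ ^ j else 0 := by
  split_ifs with hk
  · rw [setIntegral_congr_fun (measurableSet_Gset j) fun x hx => walsh_eq_one_of_mem_Gset hk hx,
      setIntegral_const, measureReal_Gset, smul_eq_mul, mul_one]
  · obtain ⟨i, hji, hi⟩ := Nat.exists_ge_and_testBit_of_ge_two_pow (not_lt.1 hk)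
    rw [← integral_indicator (measurableSet_Gset j)]
    refine integral_eq_zero_of_add_left_eq_neg (g := Pi.single i 1) fun x => ?_
    simp only [Set.indicator_apply, single_add_mem_Gset_iff hji, walsh_single_add hi]
    split_ifs <;> simp

lemma phiHat_eq_tsum {s : ℝ} (hs : s < 1) (k : ℕ) :
    phiHat s lam k = ∑' j : ℕ, 2 ^ (s * j) *
      (∫ x in Gset j, walsh k x ∂lam - ∫ x in Gset (j + 1), walsh k x ∂lam) := by
  have hmeas : ∀ j, MeasurableSet (Gset j \ Gset (j + 1)) := fun j =>
    (measurableSet_Gset j).diff (measurableSet_Gset (j + 1))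
  set F : ℕ → G → ℝ := fun j =>
    (Gset j \ Gset (j + 1)).indicator (fun y => 2 ^ (s * j) * walsh k y)
  have hF_int : ∀ j, Integrable (F j) lam := fun j =>
    ((integrable_walsh lam k).const_mul _).indicator (hmeas j)
  have hF_norm : ∀ j, ∫ x, ‖F j x‖ ∂lam ≤ ((2 : ℝ) ^ (s - 1)) ^ j := fun j => by
    simp only [F, norm_indicator_eq_indicator_norm, norm_mul, Real.norm_eq_abs, abs_walsh,
      mul_one, abs_of_pos (Real.rpow_pos_of_pos two_pos _)]
    rw [integral_indicator_const _ (hmeas j), smul_eq_mul, mul_comm,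
      ← two_rpow_mul_inv_two_pow, ← measureReal_Gset lam j]
    gcongr
    exacts [measure_ne_top lam _, Set.sdiff_subset]
  have hF_sum : Summable fun j => ∫ x, ‖F j x‖ ∂lam :=
    .of_nonneg_of_le (fun j => integral_nonneg fun x => norm_nonneg _) hF_norm
      (summable_geometric_of_lt_one (by positivity) (two_rpow_lt_one hs))
  rw [phiHat]
  simp_rw [kernel_mul_walsh_eq_tsum s k]
  rw [← integral_tsum_of_summable_integral_norm hF_int hF_sum]
  refine tsum_congr fun j => ?_
  rw [integral_indicator (hmeas j), integral_const_mul, setIntegral_sdiff (measurableSet_Gset _)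
    (integrable_walsh lam k).integrableOn (Gset_succ_subset j)]

lemma abs_phiHat_le {s : ℝ} (hs : s < 1) (k : ℕ) :
    |phiHat s lam k| ≤ ((2 : ℝ) ^ (s - 1)) ^ Nat.log 2 k / (1 - 2 ^ (s - 1)) := by
  rw [phiHat_eq_tsum lam hs]
  refine abs_tsum_le_of_abs_le_geometric (by positivity) (two_rpow_lt_one hs)
    (fun j hj => ?_) (fun j => ?_) <;> simp only [setIntegral_walsh_Gset]
  · have hk : 2 ^ (j + 1) ≤ k := Nat.pow_le_of_le_log (by rintro rfl; simp at hj) hj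
    have : 2 ^ j ≤ 2 ^ (j + 1) := Nat.pow_le_pow_right two_pos j.le_succ
    rw [if_neg (by omega), if_neg (by omega), sub_zero, mul_zero]
  · rw [abs_mul, abs_of_pos (Real.rpow_pos_of_pos two_pos _), ← two_rpow_mul_inv_two_pow]
    gcongr
    have : (2⁻¹ : ℝ) ^ (j + 1) ≤ 2⁻¹ ^ j :=
      pow_le_pow_of_le_one (by norm_num) (by norm_num) j.le_succ
    apply abs_sub_le_of_nonneg_of_le <;> split_ifs <;> first | positivity | exact this | exact le_rfl

end HaarMeasure

theorem stmt18_general (s : ℝ) (hs1 : s < 1)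
    (lam : Measure G) [IsProbabilityMeasure lam] [lam.IsAddLeftInvariant] :
    (fun k : ℕ => phiHat s lam k) =O[atTop] (fun k : ℕ => (k:ℝ) ^ (s - 1)) := by
  have hr : 0 < 1 - (2 : ℝ) ^ (s - 1) := sub_pos.2 (two_rpow_lt_one hs1)
  refine Asymptotics.IsBigO.of_bound (2 ^ (1 - s) / (1 - 2 ^ (s - 1))) ?_
  filter_upwards [eventually_ne_atTop 0] with k hk
  rw [Real.norm_eq_abs, Real.norm_of_nonneg (by positivity)]
  calc |phiHat s lam k| ≤ ((2 : ℝ) ^ (s - 1)) ^ Nat.log 2 k / (1 - 2 ^ (s - 1)) :=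
        abs_phiHat_le lam hs1 k
    _ ≤ 2 ^ (1 - s) * (k : ℝ) ^ (s - 1) / (1 - 2 ^ (s - 1)) := by
        gcongr
        exact two_rpow_pow_log_le hs1.le hk
    _ = 2 ^ (1 - s) / (1 - 2 ^ (s - 1)) * (k : ℝ) ^ (s - 1) := by ring

/-- The Walsh–Fourier coefficients of the s-kernel satisfy \hatφ_s(k) = O(k^{s-1}). -/
theorem stmt18 (s : ℝ) (hs : 0 < s) (hs1 : s < 1)
    (lam : Measure G) [IsProbabilityMeasure lam] [lam.IsAddLeftInvariant] :
    (fun k : ℕ => phiHat s lam k) =O[atTop] (fun k : ℕ => (k:ℝ) ^ (s - 1)) :=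
  stmt18_general s hs1 lam
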